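/- For every integer m ≥ 3, the star Sp(1^[m]) = K_{1,m} has local antimagic total chromatic number 2. -/
import Mathlib


open Finset

variable {V : Type*} [Fintype V] [DecidableEq V]

/-- The weight of a vertex `u` under the total labeling given by vertex labels `fv`
and edge labels `fe` : `w(u) = f(u) + \sum_{e incident to u} f(e)`. -/
def latWeight (G : SimpleGraph V) [DecidableRel G.Adj]
    (fv : V → ℕ) (fe : Sym2 V → ℕ) (u : V) : ℕ :=
  fv u + ∑ v ∈ G.neighborFinset u, fe s(u, v)

/-- `fv, fe` together form a bijection from `V(G) ∪ E(G)` onto `{1, …, p + q}`,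
where `p` is the order and `q` is the size of `G`. -/
def IsTotalLabeling (G : SimpleGraph V) [DecidableRel G.Adj]
    (fv : V → ℕ) (fe : Sym2 V → ℕ) : Prop :=
  Set.BijOn (Sum.elim fv (fun e : G.edgeSet => fe (e : Sym2 V))) Set.univ
    (Set.Icc 1 (Fintype.card V + G.edgeFinset.card))

/-- A local antimagic total labeling of `G` : a bijective total labeling such that any two
adjacent vertices get distinct weights. -/
def IsLocalAntimagicTotal (G : SimpleGraph V) [DecidableRel G.Adj]
    (fv : V → ℕ) (fe : Sym2 V → ℕ) : Prop :=
  IsTotalLabeling G fv fe ∧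
    ∀ ⦃u v : V⦄, G.Adj u v → latWeight G fv fe u ≠ latWeight G fv fe v

/-- The local antimagic total chromatic number `χ_lat(G)` : the minimum number of distinct
vertex weights taken over all local antimagic total labelings of `G`. -/
noncomputable def chiLat (G : SimpleGraph V) [DecidableRel G.Adj] : ℕ :=
  sInf {c | ∃ fv fe, IsLocalAntimagicTotal G fv fe ∧
    (Finset.univ.image (latWeight G fv fe)).card = c}

instance {W : Type*} (r : W → W → Prop) [DecidableEq W] [DecidableRel r] :
    DecidableRel (SimpleGraph.fromRel r).Adj :=
  fun a b => decidable_of_iff _ (SimpleGraph.fromRel_adj r a b).symm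

/-- The star `K_{1,m} = Sp(1^[m])` : center `none` adjacent to the `m` leaves `some i`. -/
abbrev starGraph (m : ℕ) : SimpleGraph (Option (Fin m)) :=
  SimpleGraph.fromRel (fun a b => a = none ∧ b ≠ none)

/-- For every `m ≥ 3`, the star `Sp(1^[m]) = K_{1,m}` has local antimagic total chromatic
number `2`. -/
lemma star_adj (m : ℕ) (a b : Option (Fin m)) : (starGraph m).Adj a b ↔ (a = none ∧ b ≠ none) ∨ (b = none ∧ a ≠ none) := by
  rw [SimpleGraph.fromRel_adj]
  constructor
  · rintro ⟨h, h2⟩; tauto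
  · rintro (⟨h1,h2⟩|⟨h1,h2⟩) <;> subst h1
    · exact ⟨fun h => h2 h.symm, Or.inl ⟨rfl, h2⟩⟩
    · exact ⟨h2, Or.inr ⟨rfl, h2⟩⟩

lemma star_nb_none (m : ℕ) : (starGraph m).neighborFinset none = univ.erase none := by
  ext v
  simp [SimpleGraph.mem_neighborFinset, star_adj]
  tauto

lemma star_nb_some (m : ℕ) (i : Fin m) : (starGraph m).neighborFinset (some i) = {none} := by
  ext v
  simp [SimpleGraph.mem_neighborFinset, star_adj]
  rintro rfl; simp

lemma star_mem_edge (m : ℕ) (e : Sym2 (Option (Fin m))) :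
    e ∈ (starGraph m).edgeSet ↔ ∃ i : Fin m, e = s(none, some i) := by
  induction e using Sym2.ind with
  | _ a b =>
    rw [SimpleGraph.mem_edgeSet, star_adj]
    constructor
    · rintro (⟨rfl, hb⟩ | ⟨rfl, ha⟩)
      · obtain ⟨i, rfl⟩ := Option.ne_none_iff_exists'.1 hb
        exact ⟨i, rfl⟩
      · obtain ⟨i, rfl⟩ := Option.ne_none_iff_exists'.1 ha
        exact ⟨i, Sym2.eq_swap⟩
    · rintro ⟨i, h⟩
      rw [Sym2.eq_iff] at h
      rcases h with ⟨rfl, rfl⟩ | ⟨rfl, rfl⟩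
      · exact Or.inl ⟨rfl, by simp⟩
      · exact Or.inr ⟨rfl, by simp⟩

lemma star_edgeFinset (m : ℕ) :
    (starGraph m).edgeFinset = univ.image (fun i : Fin m => s((none : Option (Fin m)), some i)) := by
  ext e
  simp [SimpleGraph.mem_edgeFinset, star_mem_edge, eq_comm]

lemma star_edge_card (m : ℕ) : (starGraph m).edgeFinset.card = m := by
  rw [star_edgeFinset, Finset.card_image_of_injective _ ?_, card_univ, Fintype.card_fin]
  intro i j h
  simp [Sym2.eq_iff] at h
  exact h

def sfv (m : ℕ) : Option (Fin m) → ℕ := fun a => a.elim (2*m+1) (fun i => (i : ℕ)+1)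
def sg (m : ℕ) : Option (Fin m) → ℕ := fun a => a.elim 0 (fun i => 2*m - (i : ℕ))
def sfe (m : ℕ) : Sym2 (Option (Fin m)) → ℕ :=
  Sym2.lift ⟨fun a b => sg m a + sg m b, fun a b => by ring⟩

@[simp] lemma sfe_apply (m : ℕ) (a b : Option (Fin m)) : sfe m s(a,b) = sg m a + sg m b := rfl

lemma weight_some (m : ℕ) (i : Fin m) :
    latWeight (starGraph m) (sfv m) (sfe m) (some i) = 2*m+1 := by
  have hi : (i : ℕ) < m := i.isLt
  rw [latWeight, star_nb_some, Finset.sum_singleton]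
  simp [sfv, sg]
  omega

lemma weight_none (m : ℕ) (hm : 3 ≤ m) :
    2*m+1 < latWeight (starGraph m) (sfv m) (sfe m) none := by
  rw [latWeight, star_nb_none]
  have h0 : (some (⟨0, by omega⟩ : Fin m)) ∈ (univ.erase (none : Option (Fin m))) := by simp
  have hle : sfe m s((none : Option (Fin m)), some (⟨0, by omega⟩ : Fin m)) ≤
      ∑ v ∈ univ.erase (none : Option (Fin m)), sfe m s(none, v) :=
    Finset.single_le_sum (f := fun v => sfe m s(none, v)) (fun v _ => Nat.zero_le _) h0
  simp only [sfv, Option.elim]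
  have : 0 < sfe m s((none : Option (Fin m)), some (⟨0, by omega⟩ : Fin m)) := by
    simp [sg]; omega
  omega

lemma star_total (m : ℕ) (hm : 3 ≤ m) : IsTotalLabeling (starGraph m) (sfv m) (sfe m) := by
  have hcard : Fintype.card (Option (Fin m)) + (starGraph m).edgeFinset.card = 2*m+1 := by
    rw [star_edge_card]; simp; omega
  rw [IsTotalLabeling, hcard]
  have hedge : ∀ e : (starGraph m).edgeSet, ∃ i : Fin m, (e : Sym2 (Option (Fin m))) = s(none, some i) :=
    fun e => (star_mem_edge m e).1 e.2
  refine ⟨?_, ?_, ?_⟩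
  · rintro (a | e) -
    · cases a with
      | none => simp [sfv]
      | some i => have := i.isLt; simp [sfv]; omega
    · obtain ⟨i, hi⟩ := hedge e
      have := i.isLt
      simp [hi, sg]
      omega
  · rintro (a | e) - (b | e') - h
    · cases a with
      | none => cases b with
        | none => rfl
        | some j => have := j.isLt; simp [sfv] at h; omega
      | some i => cases b with
        | none => have := i.isLt; simp [sfv] at h; omega
        | some j => simp [sfv] at h; simp [Fin.ext h]
    · exfalso
      obtain ⟨i, hi⟩ := hedge e'
      have := i.isLt
      cases a <;> simp [sfv, hi, sg] at h
      · omega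
      · next j => have := j.isLt; omega
    · exfalso
      obtain ⟨i, hi⟩ := hedge e
      have := i.isLt
      cases b <;> simp [sfv, hi, sg] at h
      · omega
      · next j => have := j.isLt; omega
    · obtain ⟨i, hi⟩ := hedge e
      obtain ⟨j, hj⟩ := hedge e'
      have := i.isLt; have := j.isLt
      simp [hi, hj, sg] at h
      have : i = j := Fin.ext (by omega)
      subst this
      exact congrArg Sum.inr (Subtype.ext (hi.trans hj.symm))
  · intro n hn
    simp only [Set.mem_Icc] at hn
    rcases lt_trichotomy n (m+1) with h1 | h1 | h1
    · refine ⟨Sum.inl (some ⟨n-1, by omega⟩), Set.mem_univ _, ?_⟩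
      simp [sfv]; omega
    all_goals rcases Nat.lt_or_ge n (2*m+1) with h2 | h2
    · refine ⟨Sum.inr ⟨s(none, some ⟨2*m-n, by omega⟩), (star_mem_edge m _).2 ⟨_, rfl⟩⟩,
        Set.mem_univ _, ?_⟩
      simp [sg]; omega
    · refine ⟨Sum.inl none, Set.mem_univ _, ?_⟩
      simp [sfv]; omega
    · refine ⟨Sum.inr ⟨s(none, some ⟨2*m-n, by omega⟩), (star_mem_edge m _).2 ⟨_, rfl⟩⟩,
        Set.mem_univ _, ?_⟩
      simp [sg]; omega
    · refine ⟨Sum.inl none, Set.mem_univ _, ?_⟩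
      simp [sfv]; omega

theorem chiLat_star (m : ℕ) (hm : 3 ≤ m) : chiLat (starGraph m) = 2 := by
  have h0m : (0 : ℕ) < m := by omega
  have hadj : (starGraph m).Adj none (some ⟨0, h0m⟩) := by
    rw [star_adj]; exact Or.inl ⟨rfl, by simp⟩
  have hC : latWeight (starGraph m) (sfv m) (sfe m) none ≠ 2*m+1 :=
    fun h => absurd h (by have := weight_none m hm; omega)
  have himg : (Finset.univ.image (latWeight (starGraph m) (sfv m) (sfe m))).card = 2 := by
    have : Finset.univ.image (latWeight (starGraph m) (sfv m) (sfe m)) =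
        {latWeight (starGraph m) (sfv m) (sfe m) none, 2*m+1} := by
      ext n
      simp only [Finset.mem_image, Finset.mem_univ, true_and, Finset.mem_insert,
        Finset.mem_singleton]
      constructor
      · rintro ⟨a, rfl⟩
        cases a with
        | none => exact Or.inl rfl
        | some i => exact Or.inr (weight_some m i)
      · rintro (rfl | rfl)
        · exact ⟨none, rfl⟩
        · exact ⟨some ⟨0, h0m⟩, weight_some m _⟩
    rw [this, Finset.card_insert_of_notMem (by simpa using hC), Finset.card_singleton]
  have hmem : 2 ∈ {c | ∃ fv fe, IsLocalAntimagicTotal (starGraph m) fv fe ∧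
      (Finset.univ.image (latWeight (starGraph m) fv fe)).card = c} := by
    refine ⟨sfv m, sfe m, ⟨star_total m hm, ?_⟩, himg⟩
    intro u v huv
    rw [star_adj] at huv
    rcases huv with ⟨rfl, hv⟩ | ⟨rfl, hu⟩
    · obtain ⟨i, rfl⟩ := Option.ne_none_iff_exists'.1 hv
      rw [weight_some]
      exact hC
    · obtain ⟨i, rfl⟩ := Option.ne_none_iff_exists'.1 hu
      rw [weight_some]
      exact fun h => hC h.symm
  have hlow : ∀ c ∈ {c | ∃ fv fe, IsLocalAntimagicTotal (starGraph m) fv fe ∧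
      (Finset.univ.image (latWeight (starGraph m) fv fe)).card = c}, 2 ≤ c := by
    rintro c ⟨fv, fe, ⟨-, hanti⟩, rfl⟩
    refine Finset.one_lt_card.2 ⟨latWeight (starGraph m) fv fe none, ?_,
      latWeight (starGraph m) fv fe (some ⟨0, h0m⟩), ?_, hanti hadj⟩
    · exact Finset.mem_image_of_mem _ (Finset.mem_univ _)
    · exact Finset.mem_image_of_mem _ (Finset.mem_univ _)
  refine le_antisymm (Nat.sInf_le hmem) (hlow _ (Nat.sInf_mem ⟨2, hmem⟩))
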